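/- arXiv:math/0612212 — 4 statements merged into one kernel-verified Lean document; each statement's English description precedes it below -/
import Mathlib

section
/- Let (Ω, F, P) be a probability space and let (F_t)_{t≥0} and (G_t)_{t≥0} be filtrations with G_t ⊆ F_t ⊆ F for every t. Let X = (X_t)_{t≥0} be an (F_t)-adapted process with every X_t integrable, and let g : [0,∞) × Ω → ℝ be jointly measurable such that g_s is F_s-measurable for each s and ∫₀ᵗ E|g_s| ds < ∞ for every t ≥ 0. Suppose that the process t ↦ X_t − ∫₀ᵗ g_s ds is an (F_t)-martingale. Let h : [0,∞) × Ω → ℝ be jointly measurable such that for each s, h(s,·) is a version of E[g_s | G_s]. Then the process M_t := E[X_t | G_t] − ∫₀ᵗ h(s,·) ds is a (G_t)-martingale; that is, for all 0 ≤ s ≤ t, E[X_t − ∫₀ᵗ h(u,·) du | G_s] = E[X_s | G_s] − ∫₀ˢ h(u,·) du, P-almost surely. -/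
/-!
For `A ∈ G_s ⊆ F_s` the `F`-martingale property and Fubini give
`∫_A X_t - ∫_A X_s = ∫_s^t ∫_A g_u du`, and `∫_A g_u = ∫_A h_u` for `u ≥ s` because `A ∈ G_u`;
this is the defining identity of `E[X_t - ∫₀ᵗ h | G_s]`.

The delicate point is that `∫₀ˢ h_u du` is `G_s`-measurable although `h` need not have a jointly
`Borel ⊗ G_s`-measurable version. Writing `H` for this integral and `κ = E[1_A | G_s]`,
self-adjointness of the conditional expectation and Fubini give
`∫_A E[H | G_s] = ∫ κ H = ∫₀ˢ ∫ κ h_u du = ∫₀ˢ ∫_A h_u du = ∫_A H` for every measurable `A`,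
since each `h_u` is `G_s`-measurable; hence `H = E[H | G_s]` almost surely.
-/

open MeasureTheory ProbabilityTheory Function Set

section Fubini

variable {α Ω E : Type*} [MeasurableSpace α] [MeasurableSpace Ω] [NormedAddCommGroup E]
  {ν : Measure α} {μ : Measure Ω} [SFinite μ]

lemma integrable_uncurry_of_lintegral_lt_top {f : α → Ω → E}
    (hf : AEStronglyMeasurable (uncurry f) (ν.prod μ))
    (hfin : ∫⁻ u, ∫⁻ ω, ‖f u ω‖ₑ ∂μ ∂ν < ⊤) : Integrable (uncurry f) (ν.prod μ) :=
  ⟨hf, by rwa [hasFiniteIntegral_iff_enorm, lintegral_prod _ hf.enorm]⟩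

lemma integrable_uncurry_of_ae_eLpNorm_le {f g : α → Ω → E}
    (hg : Integrable (uncurry g) (ν.prod μ)) (hf : AEStronglyMeasurable (uncurry f) (ν.prod μ))
    (hfg : ∀ᵐ u ∂ν, eLpNorm (f u) 1 μ ≤ eLpNorm (g u) 1 μ) :
    Integrable (uncurry f) (ν.prod μ) := by
  refine integrable_uncurry_of_lintegral_lt_top hf ?_
  simp only [eLpNorm_one_eq_lintegral_enorm] at hfg
  calc ∫⁻ u, ∫⁻ ω, ‖f u ω‖ₑ ∂μ ∂ν ≤ ∫⁻ u, ∫⁻ ω, ‖g u ω‖ₑ ∂μ ∂ν := lintegral_mono_ae hfg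
    _ = ∫⁻ p, ‖uncurry g p‖ₑ ∂(ν.prod μ) := (lintegral_prod _ hg.1.enorm).symm
    _ < ⊤ := hg.2

variable [SFinite ν]

lemma MeasureTheory.Integrable.prod_restrict_right {f : α × Ω → E}
    (hf : Integrable f (ν.prod μ)) (A : Set Ω) : Integrable f (ν.prod (μ.restrict A)) := by
  rw [← Measure.restrict_univ (μ := ν), Measure.prod_restrict]
  exact hf.restrict

lemma setIntegral_integral_swap [NormedSpace ℝ E] {f : α → Ω → E}
    (hf : Integrable (uncurry f) (ν.prod μ)) (A : Set Ω) :
    ∫ ω in A, ∫ u, f u ω ∂ν ∂μ = ∫ u, ∫ ω in A, f u ω ∂μ ∂ν :=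
  (integral_integral_swap (hf.prod_restrict_right A)).symm

end Fubini

section CondExp

variable {Ω : Type*} {m m0 : MeasurableSpace Ω} {μ : Measure Ω} [IsFiniteMeasure μ]

lemma norm_indicator_one_le (A : Set Ω) (ω : Ω) : ‖A.indicator (1 : Ω → ℝ) ω‖ ≤ 1 :=
  (norm_indicator_le_norm_self 1 ω).trans_eq norm_one

lemma integral_condExp_indicator_mul (hm : m ≤ m0) {f : Ω → ℝ} (hf : Integrable f μ)
    {A : Set Ω} (hA : MeasurableSet A) :
    ∫ ω, μ[A.indicator 1 | m] ω * f ω ∂μ = ∫ ω in A, μ[f | m] ω ∂μ := by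
  have hbdd : ∀ᵐ ω ∂μ, ‖μ[A.indicator (1 : Ω → ℝ) | m] ω‖ ≤ 1 :=
    ae_bdd_abs_condExp_of_ae_bdd_abs (ae_of_all _ (norm_indicator_one_le A))
  have hind : Integrable (A.indicator (1 : Ω → ℝ)) μ := (integrable_const 1).indicator hA
  calc ∫ ω, μ[A.indicator 1 | m] ω * f ω ∂μ
      = ∫ ω, μ[μ[A.indicator 1 | m] * f | m] ω ∂μ := (integral_condExp hm).symm
    _ = ∫ ω, μ[A.indicator 1 | m] ω * μ[f | m] ω ∂μ := integral_congr_ae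
        (condExp_stronglyMeasurable_mul_of_bound hm stronglyMeasurable_condExp hf 1 hbdd)
    _ = ∫ ω, μ[A.indicator 1 * μ[f | m] | m] ω ∂μ := integral_congr_ae
        (condExp_mul_of_stronglyMeasurable_right stronglyMeasurable_condExp
          (integrable_condExp.bdd_mul hind.1 (ae_of_all _ (norm_indicator_one_le A))) hind).symm
    _ = ∫ ω in A, μ[f | m] ω ∂μ := by
        rw [integral_condExp hm, ← integral_indicator hA]
        congr 1 with ω
        by_cases hω : ω ∈ A <;> simp [hω]

theorem aestronglyMeasurable_integral_of_ae_aestronglyMeasurable {α : Type*} [MeasurableSpace α]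
    {ν : Measure α} [SFinite ν] (hm : m ≤ m0) {f : α → Ω → ℝ}
    (hf : Integrable (uncurry f) (ν.prod μ)) (hfm : ∀ᵐ u ∂ν, AEStronglyMeasurable[m] (f u) μ) :
    AEStronglyMeasurable[m] (fun ω => ∫ u, f u ω ∂ν) μ := by
  set H := fun ω => ∫ u, f u ω ∂ν
  have hH : Integrable H μ := hf.integral_prod_right
  suffices H =ᵐ[μ] μ[H | m] from ⟨μ[H | m], stronglyMeasurable_condExp, this⟩
  refine ae_eq_of_forall_setIntegral_eq_of_sigmaFinite (fun _ _ _ => hH.integrableOn)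
    (fun _ _ _ => integrable_condExp.integrableOn) fun A hA _ => ?_
  set κ := μ[A.indicator (1 : Ω → ℝ) | m]
  have hκf : Integrable (uncurry fun u ω => κ ω * f u ω) (ν.prod μ) :=
    hf.bdd_mul (c := 1) (stronglyMeasurable_condExp.mono hm).aestronglyMeasurable.comp_snd
      (Measure.quasiMeasurePreserving_snd.ae
        (ae_bdd_abs_condExp_of_ae_bdd_abs (ae_of_all _ (norm_indicator_one_le A))))
  have hsection : ∀ᵐ u ∂ν, ∫ ω, κ ω * f u ω ∂μ = ∫ ω in A, f u ω ∂μ := by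
    filter_upwards [hfm, hf.prod_right_ae] with u hmeas hint
    rw [integral_condExp_indicator_mul hm (f := f u) hint hA]
    exact integral_congr_ae (ae_restrict_of_ae (condExp_of_aestronglyMeasurable' hm hmeas hint))
  calc ∫ ω in A, H ω ∂μ = ∫ u, ∫ ω in A, f u ω ∂μ ∂ν := setIntegral_integral_swap hf A
    _ = ∫ u, ∫ ω, κ ω * f u ω ∂μ ∂ν := integral_congr_ae (hsection.mono fun u hu => hu.symm)
    _ = ∫ ω, κ ω * H ω ∂μ := by
        rw [integral_integral_swap hκf]
        simp only [H, integral_const_mul]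
    _ = ∫ ω in A, μ[H | m] ω ∂μ := integral_condExp_indicator_mul hm hH hA

lemma setIntegral_eq_of_condExp_ae_eq (hm : m ≤ m0) {f f' : Ω → ℝ} (hf : Integrable f μ)
    (hff' : μ[f | m] =ᵐ[μ] f') {A : Set Ω} (hA : MeasurableSet[m] A) :
    ∫ ω in A, f ω ∂μ = ∫ ω in A, f' ω ∂μ := by
  rw [← setIntegral_condExp hm hf hA]
  exact integral_congr_ae (ae_restrict_of_ae hff')

end CondExp

section TimeIntegral

variable {Ω E : Type*} [MeasurableSpace Ω] [NormedAddCommGroup E] [NormedSpace ℝ E]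
  {μ : Measure Ω} [SFinite μ] {k : ℝ → Ω → E}

lemma integrable_intervalIntegral {r : ℝ} (hr : 0 ≤ r)
    (hk : Integrable (uncurry k) ((volume.restrict (Ioc 0 r)).prod μ)) :
    Integrable (fun ω => ∫ u in 0..r, k u ω) μ := by
  simpa only [intervalIntegral.integral_of_le hr, uncurry_apply_pair]
    using hk.integral_prod_right

lemma setIntegral_intervalIntegral_sub {s t : ℝ} (hs : 0 ≤ s) (hst : s ≤ t)
    (hks : Integrable (uncurry k) ((volume.restrict (Ioc 0 s)).prod μ))
    (hkt : Integrable (uncurry k) ((volume.restrict (Ioc 0 t)).prod μ)) (A : Set Ω) :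
    ∫ ω in A, (∫ u in 0..t, k u ω) ∂μ - ∫ ω in A, (∫ u in 0..s, k u ω) ∂μ
      = ∫ u in s..t, ∫ ω in A, k u ω ∂μ := by
  have hswap : ∀ r, 0 ≤ r → Integrable (uncurry k) ((volume.restrict (Ioc 0 r)).prod μ) →
      ∫ ω in A, (∫ u in 0..r, k u ω) ∂μ = ∫ u in 0..r, ∫ ω in A, k u ω ∂μ ∧
        IntervalIntegrable (fun u => ∫ ω in A, k u ω ∂μ) volume 0 r := fun r hr hk => by
    simp only [intervalIntegral.integral_of_le hr, intervalIntegrable_iff_integrableOn_Ioc_of_le hr]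
    exact ⟨setIntegral_integral_swap hk A, (hk.prod_restrict_right A).integral_prod_left⟩
  obtain ⟨hs_eq, hs_int⟩ := hswap s hs hks
  obtain ⟨ht_eq, ht_int⟩ := hswap t (hs.trans hst) hkt
  rw [hs_eq, ht_eq, intervalIntegral.integral_interval_sub_left ht_int hs_int]

end TimeIntegral

lemma intervalIntegral_setIntegral_eq_of_ae_eq_condExp {Ω : Type*} [m0 : MeasurableSpace Ω]
    {μ : Measure Ω} [IsFiniteMeasure μ] (G : Filtration ℝ m0) {g h : ℝ → Ω → ℝ}
    (hh : ∀ u, h u =ᵐ[μ] μ[g u | G u]) {s t : ℝ} (hs : 0 ≤ s) (hst : s ≤ t)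
    (hg : Integrable (uncurry g) ((volume.restrict (Ioc 0 t)).prod μ))
    {A : Set Ω} (hA : MeasurableSet[G s] A) :
    ∫ u in s..t, ∫ ω in A, h u ω ∂μ = ∫ u in s..t, ∫ ω in A, g u ω ∂μ := by
  refine intervalIntegral.integral_congr_ae ?_
  filter_upwards [(ae_restrict_iff' measurableSet_Ioc).1 hg.prod_right_ae] with u hu_int hu
  rw [uIoc_of_le hst] at hu
  exact (setIntegral_eq_of_condExp_ae_eq (f := g u) (G.le u)
    (hu_int ⟨hs.trans_lt hu.1, hu.2⟩) (hh u).symm (G.mono hu.1.le A hA)).symm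

theorem filter_semimartingale_projection_general
    {Ω : Type*} [m0 : MeasurableSpace Ω] {μ : Measure Ω} [IsProbabilityMeasure μ]
    (F G : Filtration ℝ m0) (hFG : ∀ t : ℝ, G t ≤ F t)
    (X : ℝ → Ω → ℝ)
    (hXint : ∀ t : ℝ, Integrable (X t) μ)
    (g : ℝ → Ω → ℝ)
    (hgmeas : Measurable (Function.uncurry g))
    (hgint : ∀ t : ℝ, 0 ≤ t → ∫⁻ s in Set.Ioc (0 : ℝ) t, ∫⁻ ω, ‖g s ω‖₊ ∂μ < ⊤)
    (hmart : ∀ s t : ℝ, 0 ≤ s → s ≤ t →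
      μ[(fun ω => X t ω - ∫ u in (0 : ℝ)..t, g u ω) | F s]
        =ᵐ[μ] fun ω => X s ω - ∫ u in (0 : ℝ)..s, g u ω)
    (h : ℝ → Ω → ℝ)
    (hhmeas : Measurable (Function.uncurry h))
    (hh : ∀ s : ℝ, h s =ᵐ[μ] μ[g s | G s]) :
    ∀ s t : ℝ, 0 ≤ s → s ≤ t →
      μ[(fun ω => X t ω - ∫ u in (0 : ℝ)..t, h u ω) | G s]
        =ᵐ[μ] fun ω => (μ[X s | G s]) ω - ∫ u in (0 : ℝ)..s, h u ω := by
  intro s t hs hst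
  have ht := hs.trans hst
  have hg_int : ∀ r, 0 ≤ r → Integrable (uncurry g) ((volume.restrict (Ioc 0 r)).prod μ) :=
    fun r hr => integrable_uncurry_of_lintegral_lt_top hgmeas.aestronglyMeasurable (hgint r hr)
  have hh_int : ∀ r, 0 ≤ r → Integrable (uncurry h) ((volume.restrict (Ioc 0 r)).prod μ) :=
    fun r hr => integrable_uncurry_of_ae_eLpNorm_le (hg_int r hr) hhmeas.aestronglyMeasurable
      (ae_of_all _ fun u => (eLpNorm_congr_ae (hh u)).trans_le (eLpNorm_condExp_le_eLpNorm _ le_rfl))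
  have hHs_meas : AEStronglyMeasurable[G s] (fun ω => ∫ u in 0..s, h u ω) μ := by
    simp only [intervalIntegral.integral_of_le hs]
    exact aestronglyMeasurable_integral_of_ae_aestronglyMeasurable (G.le s) (hh_int s hs)
      (ae_restrict_of_forall_mem measurableSet_Ioc fun u hu =>
        ⟨_, stronglyMeasurable_condExp.mono (G.mono hu.2), hh u⟩)
  have hG r hr := integrable_intervalIntegral (k := g) hr (hg_int r hr)
  have hH r hr := integrable_intervalIntegral (k := h) hr (hh_int r hr)
  refine (ae_eq_condExp_of_forall_setIntegral_eq (G.le s) ((hXint t).sub (hH t ht))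
    (fun A _ _ => (integrable_condExp.sub (hH s hs)).integrableOn) (fun A hA _ => ?_)
    (stronglyMeasurable_condExp.aestronglyMeasurable.sub hHs_meas)).symm
  have hmartA := setIntegral_eq_of_condExp_ae_eq (F.le s) ((hXint t).sub (hG t ht))
    (hmart s t hs hst) (hFG s A hA)
  simp only [Pi.sub_apply] at hmartA ⊢
  rw [integral_sub (hXint t).integrableOn (hG t ht).integrableOn,
    integral_sub (hXint s).integrableOn (hG s hs).integrableOn] at hmartA
  rw [integral_sub integrable_condExp.integrableOn (hH s hs).integrableOn,
    integral_sub (hXint t).integrableOn (hH t ht).integrableOn,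
    setIntegral_condExp (G.le s) (hXint s) hA]
  linarith [setIntegral_intervalIntegral_sub hs hst (hh_int s hs) (hh_int t ht) A,
    setIntegral_intervalIntegral_sub hs hst (hg_int s hs) (hg_int t ht) A,
    intervalIntegral_setIntegral_eq_of_ae_eq_condExp G hh hs hst (hg_int t ht) hA]

/-- Semimartingale-projection step: if `X_t - ∫₀ᵗ g_s ds` is an `F`-martingale and
`h s` is a version of `E[g s | G s]`, then `E[X_t | G_t] - ∫₀ᵗ h_s ds` is a `G`-martingale. -/
theorem filter_semimartingale_projection
    {Ω : Type*} [m0 : MeasurableSpace Ω] {μ : Measure Ω} [IsProbabilityMeasure μ]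
    (F G : Filtration ℝ m0) (hFG : ∀ t : ℝ, G t ≤ F t)
    (X : ℝ → Ω → ℝ)
    (hXadapted : ∀ t : ℝ, StronglyMeasurable[F t] (X t))
    (hXint : ∀ t : ℝ, Integrable (X t) μ)
    (g : ℝ → Ω → ℝ)
    (hgmeas : Measurable (Function.uncurry g))
    (hgadapted : ∀ s : ℝ, StronglyMeasurable[F s] (g s))
    (hgint : ∀ t : ℝ, 0 ≤ t → ∫⁻ s in Set.Ioc (0 : ℝ) t, ∫⁻ ω, ‖g s ω‖₊ ∂μ < ⊤)
    (hmart : ∀ s t : ℝ, 0 ≤ s → s ≤ t →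
      μ[(fun ω => X t ω - ∫ u in (0 : ℝ)..t, g u ω) | F s]
        =ᵐ[μ] fun ω => X s ω - ∫ u in (0 : ℝ)..s, g u ω)
    (h : ℝ → Ω → ℝ)
    (hhmeas : Measurable (Function.uncurry h))
    (hh : ∀ s : ℝ, h s =ᵐ[μ] μ[g s | G s]) :
    ∀ s t : ℝ, 0 ≤ s → s ≤ t →
      μ[(fun ω => X t ω - ∫ u in (0 : ℝ)..t, h u ω) | G s]
        =ᵐ[μ] fun ω => (μ[X s | G s]) ω - ∫ u in (0 : ℝ)..s, h u ω :=
  filter_semimartingale_projection_general (m0 := m0) F G hFG X hXint g hgmeas hgint hmart h hhmeas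
    hh
end

section
/- Let (Ω, F, P) be a probability space and let (F_t)_{t≥0} and (G_t)_{t≥0} be filtrations with G_t ⊆ F_t ⊆ F for every t. Let g : [0,∞) × Ω → ℝ be jointly measurable such that g_s is F_s-measurable for each s and ∫₀ᵗ E|g_s| ds < ∞ for every t ≥ 0, and let h : [0,∞) × Ω → ℝ be jointly measurable such that for each s, h(s,·) is a version of E[g_s | G_s]. Then the process M_t := E[∫₀ᵗ g_u du | G_t] − ∫₀ᵗ h(u,·) du is a (G_t)-martingale; that is, for all 0 ≤ s ≤ t, E[∫₀ᵗ g_u du − ∫₀ᵗ h(u,·) du | G_s] = E[∫₀ˢ g_u du | G_s] − ∫₀ˢ h(u,·) du, P-almost surely. -/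
open MeasureTheory ProbabilityTheory

section Aux

lemma measurable_real_sign : Measurable Real.sign := by
  have : Real.sign = fun r : ℝ => if r < 0 then (-1 : ℝ) else if 0 < r then 1 else 0 := by
    funext r; rfl
  rw [this]
  exact Measurable.ite (measurableSet_lt measurable_id measurable_const) measurable_const
    (Measurable.ite (measurableSet_lt measurable_const measurable_id) measurable_const
      measurable_const)

lemma real_sign_norm_le (r : ℝ) : ‖Real.sign r‖ ≤ 1 := by
  rcases lt_trichotomy r 0 with hr | hr | hr
  · rw [Real.sign_of_neg hr]; norm_num
  · rw [hr, Real.sign_zero]; norm_num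
  · rw [Real.sign_of_pos hr]; norm_num

lemma mul_real_sign (r : ℝ) : r * Real.sign r = |r| := by
  rcases lt_trichotomy r 0 with hr | hr | hr
  · rw [Real.sign_of_neg hr, abs_of_neg hr]; ring
  · simp [hr]
  · rw [Real.sign_of_pos hr, abs_of_pos hr]; ring

lemma integrable_uncurry_of_lintegral {Ω : Type*} [m0 : MeasurableSpace Ω]
    {μ : Measure Ω} [SFinite μ] {f : ℝ → Ω → ℝ}
    (hf : Measurable (Function.uncurry f)) {S : Set ℝ}
    (hfin : ∫⁻ u in S, ∫⁻ ω, ‖f u ω‖₊ ∂μ < ⊤) :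
    Integrable (Function.uncurry f) ((volume.restrict S).prod μ) := by
  refine ⟨hf.aestronglyMeasurable, ?_⟩
  rw [HasFiniteIntegral, lintegral_prod _ hf.enorm.aemeasurable]
  exact hfin

lemma swap_setIntegral {Ω : Type*} [m0 : MeasurableSpace Ω]
    {μ : Measure Ω} [IsProbabilityMeasure μ] {S : Set ℝ} {A : Set Ω}
    (hA : MeasurableSet A) {f : ℝ → Ω → ℝ}
    (hf : Integrable (Function.uncurry f) ((volume.restrict S).prod μ)) :
    ∫ ω in A, (∫ u in S, f u ω) ∂μ = ∫ u in S, (∫ ω in A, f u ω ∂μ) := by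
  have hres : Integrable (Function.uncurry f) ((volume.restrict S).prod (μ.restrict A)) := by
    have heq : (volume.restrict S).prod (μ.restrict A)
        = ((volume.restrict S).prod μ).restrict (Set.univ ×ˢ A) := by
      rw [← Measure.prod_restrict, Measure.restrict_univ]
    rw [heq]
    exact hf.restrict
  exact (integral_integral_swap hres).symm

/-- Pull-out comparison: if `z` is a.e. `m`-measurable and integrable, `φ` is bounded by 1
and `φ₂` is an `m`-measurable a.e. version of `μ[φ|m]`, then `∫ z φ = ∫ z φ₂`. -/
lemma integral_mul_congr_of_aesm {Ω : Type*} {m m0 : MeasurableSpace Ω}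
    {μ : Measure Ω} [IsProbabilityMeasure μ] (hm : m ≤ m0) {φ φ₂ : Ω → ℝ}
    (hφmeas : AEStronglyMeasurable φ μ) (hφbdd : ∀ x, ‖φ x‖ ≤ 1)
    (hφ₂ : StronglyMeasurable[m] φ₂) (hφ₂eq : φ₂ =ᵐ[μ] μ[φ|m])
    {z : Ω → ℝ} (hz : AEStronglyMeasurable[m] z μ) (hzint : Integrable z μ) :
    ∫ ω, z ω * φ ω ∂μ = ∫ ω, z ω * φ₂ ω ∂μ := by
  have hφint : Integrable φ μ :=
    Integrable.mono' (integrable_const 1) hφmeas (Filter.Eventually.of_forall hφbdd)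
  set z' := hz.mk z with hz'def
  have hz'm : StronglyMeasurable[m] z' := hz.stronglyMeasurable_mk
  have hzz' : z =ᵐ[μ] z' := hz.ae_eq_mk
  have hz'int : Integrable z' μ := hzint.congr hzz'
  have hmul_int : Integrable (z' * φ) μ := by
    have h1 := Integrable.bdd_mul hz'int hφmeas (Filter.Eventually.of_forall hφbdd)
    exact h1.congr (Filter.Eventually.of_forall fun x => mul_comm _ _)
  calc ∫ ω, z ω * φ ω ∂μ = ∫ ω, (z' * φ) ω ∂μ := by
        refine integral_congr_ae ?_
        filter_upwards [hzz'] with ω hω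
        simp [Pi.mul_apply, hω]
    _ = ∫ ω, (μ[z' * φ | m]) ω ∂μ := (integral_condExp hm).symm
    _ = ∫ ω, (z' * μ[φ|m]) ω ∂μ :=
        integral_congr_ae (condExp_mul_of_stronglyMeasurable_left hz'm hmul_int hφint)
    _ = ∫ ω, z ω * φ₂ ω ∂μ := by
        refine integral_congr_ae ?_
        filter_upwards [hzz', hφ₂eq] with ω h1 h2
        simp [Pi.mul_apply, h1, h2]

/-- If for `ν`-a.e. `u` the function `h u` is a.e. `m`-measurable, then
`ω ↦ ∫ u, h u ω ∂ν` is a.e. equal to its conditional expectation w.r.t. `m`. -/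
lemma ae_eq_condexp_integral_param {Ω : Type*} {m m0 : MeasurableSpace Ω}
    {μ : Measure Ω} [IsProbabilityMeasure μ] (hm : m ≤ m0) {ν : Measure ℝ} [IsFiniteMeasure ν] {h : ℝ → Ω → ℝ}
    (hint : Integrable (Function.uncurry h) (ν.prod μ))
    (hsm : ∀ᵐ u ∂ν, AEStronglyMeasurable[m] (h u) μ) :
    (fun ω => ∫ u, h u ω ∂ν) =ᵐ[μ] μ[(fun ω => ∫ u, h u ω ∂ν) | m] := by
  set k := fun ω => ∫ u, h u ω ∂ν with hkdef
  have hkint : Integrable k μ := by simpa [Function.uncurry] using hint.integral_prod_right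
  set c := μ[k | m] with hcdef
  have hcint : Integrable c μ := integrable_condExp
  have hdmeas : AEStronglyMeasurable (fun ω => k ω - c ω) μ := hkint.1.sub hcint.1
  set d' := hdmeas.mk _ with hd'def
  have hd'sm : StronglyMeasurable d' := hdmeas.stronglyMeasurable_mk
  have hdd' : (fun ω => k ω - c ω) =ᵐ[μ] d' := hdmeas.ae_eq_mk
  set φ := fun ω => Real.sign (d' ω) with hφdef
  have hφm : Measurable φ := measurable_real_sign.comp hd'sm.measurable
  have hφmeas : AEStronglyMeasurable φ μ := hφm.aestronglyMeasurable
  have hφbdd : ∀ x, ‖φ x‖ ≤ 1 := fun x => real_sign_norm_le _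
  have hbdd2 : ∀ᵐ ω ∂μ, |(μ[φ|m]) ω| ≤ ((1 : NNReal) : ℝ) :=
    ae_bdd_condExp_of_ae_bdd (Filter.Eventually.of_forall fun x => by
      simpa [Real.norm_eq_abs] using hφbdd x)
  set φ₂ := fun ω => max (-1 : ℝ) (min 1 ((μ[φ|m]) ω)) with hφ₂def
  have hφ₂sm : StronglyMeasurable[m] φ₂ :=
    (continuous_const.max (continuous_const.min continuous_id)).comp_stronglyMeasurable
      stronglyMeasurable_condExp
  have hφ₂eq : φ₂ =ᵐ[μ] μ[φ|m] := by
    filter_upwards [hbdd2] with ω hω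
    have h2 := abs_le.mp (by exact_mod_cast hω)
    simp only [hφ₂def]
    rw [min_eq_right h2.2, max_eq_right h2.1]
  have hφ₂bdd : ∀ x, ‖φ₂ x‖ ≤ 1 := by
    intro x
    rw [Real.norm_eq_abs, abs_le]
    exact ⟨le_max_left _ _, max_le (by norm_num) (min_le_left _ _)⟩
  have hφ₂m : Measurable φ₂ := (hφ₂sm.mono hm).measurable
  -- swap lemma for bounded multipliers
  have hswap : ∀ (ψ : Ω → ℝ), Measurable ψ → (∀ x, ‖ψ x‖ ≤ 1) →
      ∫ ω, k ω * ψ ω ∂μ = ∫ u, (∫ ω, h u ω * ψ ω ∂μ) ∂ν := by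
    intro ψ hψm hψb
    have hintψ : Integrable (Function.uncurry (fun u ω => h u ω * ψ ω)) (ν.prod μ) := by
      have h1 := Integrable.bdd_mul hint
        ((hψm.comp measurable_snd).aestronglyMeasurable) (Filter.Eventually.of_forall fun p => hψb _)
      exact h1.congr (Filter.Eventually.of_forall fun p => mul_comm _ _)
    have h2 := integral_integral_swap hintψ
    -- h2 : ∫ u, ∫ ω, h u ω * ψ ω ∂μ ∂ν = ∫ ω, ∫ u, h u ω * ψ ω ∂ν ∂μ
    rw [h2]
    refine integral_congr_ae (Filter.Eventually.of_forall fun ω => ?_)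
    · show k ω * ψ ω = ∫ u, h u ω * ψ ω ∂ν
      exact (integral_mul_const (ψ ω) fun u => h u ω).symm
  -- z-results
  have hzc : ∫ ω, c ω * φ ω ∂μ = ∫ ω, c ω * φ₂ ω ∂μ :=
    integral_mul_congr_of_aesm hm hφmeas hφbdd hφ₂sm hφ₂eq
      stronglyMeasurable_condExp.aestronglyMeasurable hcint
  have hzk : ∫ ω, k ω * φ ω ∂μ = ∫ ω, k ω * φ₂ ω ∂μ := by
    rw [hswap φ hφm hφbdd, hswap φ₂ hφ₂m hφ₂bdd]
    refine integral_congr_ae ?_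
    filter_upwards [hsm, hint.prod_right_ae] with u h1 h2
    exact integral_mul_congr_of_aesm hm hφmeas hφbdd hφ₂sm hφ₂eq h1 h2
  -- k vs c against φ₂
  have hkc : ∫ ω, k ω * φ₂ ω ∂μ = ∫ ω, c ω * φ₂ ω ∂μ := by
    have hmul_int : Integrable (φ₂ * k) μ := by
      have h1 := Integrable.bdd_mul hkint (hφ₂m.aestronglyMeasurable) (Filter.Eventually.of_forall hφ₂bdd)
      exact h1
    calc ∫ ω, k ω * φ₂ ω ∂μ = ∫ ω, (φ₂ * k) ω ∂μ := by
          refine integral_congr_ae (Filter.Eventually.of_forall fun ω => ?_)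
          simp [Pi.mul_apply, mul_comm]
      _ = ∫ ω, (μ[φ₂ * k | m]) ω ∂μ := (integral_condExp hm).symm
      _ = ∫ ω, (φ₂ * μ[k|m]) ω ∂μ :=
          integral_congr_ae (condExp_mul_of_stronglyMeasurable_left hφ₂sm hmul_int hkint)
      _ = ∫ ω, c ω * φ₂ ω ∂μ := by
          refine integral_congr_ae (Filter.Eventually.of_forall fun ω => ?_)
          simp [Pi.mul_apply, mul_comm, hcdef]
  -- integrabilities for linearity
  have hi1 : Integrable (fun ω => k ω * φ ω) μ :=
    (Integrable.bdd_mul hkint hφmeas (Filter.Eventually.of_forall hφbdd)).congr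
      (Filter.Eventually.of_forall fun x => mul_comm _ _)
  have hi2 : Integrable (fun ω => c ω * φ ω) μ :=
    (Integrable.bdd_mul hcint hφmeas (Filter.Eventually.of_forall hφbdd)).congr
      (Filter.Eventually.of_forall fun x => mul_comm _ _)
  have hi3 : Integrable (fun ω => k ω * φ₂ ω) μ :=
    (Integrable.bdd_mul hkint hφ₂m.aestronglyMeasurable (Filter.Eventually.of_forall hφ₂bdd)).congr
      (Filter.Eventually.of_forall fun x => mul_comm _ _)
  have hi4 : Integrable (fun ω => c ω * φ₂ ω) μ :=
    (Integrable.bdd_mul hcint hφ₂m.aestronglyMeasurable (Filter.Eventually.of_forall hφ₂bdd)).congr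
      (Filter.Eventually.of_forall fun x => mul_comm _ _)
  -- the key: ∫ |k - c| = 0
  have habs : ∫ ω, |k ω - c ω| ∂μ = 0 := by
    have h1 : ∫ ω, (k ω - c ω) * φ ω ∂μ = ∫ ω, |k ω - c ω| ∂μ := by
      refine integral_congr_ae ?_
      filter_upwards [hdd'] with ω hω
      have hω' : k ω - c ω = d' ω := hω
      simp only [hφdef]
      rw [hω', mul_real_sign]
    have h2 : ∫ ω, (k ω - c ω) * φ ω ∂μ = 0 := by
      have e1 : ∫ ω, (k ω - c ω) * φ ω ∂μ
          = ∫ ω, k ω * φ ω ∂μ - ∫ ω, c ω * φ ω ∂μ := by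
        rw [← integral_sub hi1 hi2]
        refine integral_congr_ae (Filter.Eventually.of_forall fun ω => ?_)
        ring
      rw [e1, hzk, hzc, hkc, sub_self]
    rw [← h1, h2]
  have habs_int : Integrable (fun ω => |k ω - c ω|) μ := (hkint.sub hcint).abs
  have hzero : (fun ω => |k ω - c ω|) =ᵐ[μ] 0 := by
    refine (integral_eq_zero_iff_of_nonneg (fun ω => abs_nonneg _) habs_int).mp habs
  filter_upwards [hzero] with ω hω
  have : |k ω - c ω| = 0 := hω
  have := abs_eq_zero.mp this
  linarith [sub_eq_zero.mp this]

end Aux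

/-- If `h s` is a version of `E[g s | G s]`, then
`E[∫₀ᵗ g_u du | G_t] - ∫₀ᵗ h_u du` is a `G`-martingale. -/
theorem projected_drift_compensation_is_martingale
    {Ω : Type*} [m0 : MeasurableSpace Ω] {μ : Measure Ω} [IsProbabilityMeasure μ]
    (F G : Filtration ℝ m0) (hFG : ∀ t : ℝ, G t ≤ F t)
    (g : ℝ → Ω → ℝ)
    (hgmeas : Measurable (Function.uncurry g))
    (hgadapted : ∀ s : ℝ, StronglyMeasurable[F s] (g s))
    (hgint : ∀ t : ℝ, 0 ≤ t → ∫⁻ s in Set.Ioc (0 : ℝ) t, ∫⁻ ω, ‖g s ω‖₊ ∂μ < ⊤)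
    (h : ℝ → Ω → ℝ)
    (hhmeas : Measurable (Function.uncurry h))
    (hh : ∀ s : ℝ, h s =ᵐ[μ] μ[g s | G s]) :
    ∀ s t : ℝ, 0 ≤ s → s ≤ t →
      μ[(fun ω => (∫ u in (0 : ℝ)..t, g u ω) - ∫ u in (0 : ℝ)..t, h u ω) | G s]
        =ᵐ[μ] fun ω =>
          (μ[(fun ω' => ∫ u in (0 : ℝ)..s, g u ω') | G s]) ω - ∫ u in (0 : ℝ)..s, h u ω := by
  intro s t hs hst
  have ht0 : (0 : ℝ) ≤ t := hs.trans hst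
  simp only [intervalIntegral.integral_of_le hs, intervalIntegral.integral_of_le ht0]
  -- basic inclusions
  have hsub_s : Set.Ioc (0 : ℝ) s ⊆ Set.Ioc (0 : ℝ) t := Set.Ioc_subset_Ioc_right hst
  have hsub_st : Set.Ioc s t ⊆ Set.Ioc (0 : ℝ) t := Set.Ioc_subset_Ioc_left hs
  -- h is dominated by g in L¹ norms
  have hhle : ∀ S : Set ℝ,
      ∫⁻ u in S, ∫⁻ ω, ‖h u ω‖₊ ∂μ ≤ ∫⁻ u in S, ∫⁻ ω, ‖g u ω‖₊ ∂μ := by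
    intro S
    refine lintegral_mono fun u => ?_
    calc ∫⁻ ω, ‖h u ω‖₊ ∂μ = eLpNorm (h u) 1 μ := (eLpNorm_one_eq_lintegral_enorm (f := h u)).symm
      _ = eLpNorm (μ[g u | G u]) 1 μ := eLpNorm_congr_ae (hh u)
      _ ≤ eLpNorm (g u) 1 μ := eLpNorm_one_condExp_le_eLpNorm _
      _ = ∫⁻ ω, ‖g u ω‖₊ ∂μ := eLpNorm_one_eq_lintegral_enorm (f := g u)
  -- product integrabilities
  have hPg_t : Integrable (Function.uncurry g) ((volume.restrict (Set.Ioc (0:ℝ) t)).prod μ) :=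
    integrable_uncurry_of_lintegral hgmeas (hgint t ht0)
  have hPg_s : Integrable (Function.uncurry g) ((volume.restrict (Set.Ioc (0:ℝ) s)).prod μ) :=
    integrable_uncurry_of_lintegral hgmeas
      (lt_of_le_of_lt (lintegral_mono_set hsub_s) (hgint t ht0))
  have hPg_st : Integrable (Function.uncurry g) ((volume.restrict (Set.Ioc s t)).prod μ) :=
    integrable_uncurry_of_lintegral hgmeas
      (lt_of_le_of_lt (lintegral_mono_set hsub_st) (hgint t ht0))
  have hPh_t : Integrable (Function.uncurry h) ((volume.restrict (Set.Ioc (0:ℝ) t)).prod μ) :=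
    integrable_uncurry_of_lintegral hhmeas
      (lt_of_le_of_lt (hhle _) (hgint t ht0))
  have hPh_s : Integrable (Function.uncurry h) ((volume.restrict (Set.Ioc (0:ℝ) s)).prod μ) :=
    integrable_uncurry_of_lintegral hhmeas
      (lt_of_le_of_lt (hhle _) (lt_of_le_of_lt (lintegral_mono_set hsub_s) (hgint t ht0)))
  have hPh_st : Integrable (Function.uncurry h) ((volume.restrict (Set.Ioc s t)).prod μ) :=
    integrable_uncurry_of_lintegral hhmeas
      (lt_of_le_of_lt (hhle _) (lt_of_le_of_lt (lintegral_mono_set hsub_st) (hgint t ht0)))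
  -- slice integrabilities over μ
  have hK0t : Integrable (fun ω => ∫ u in Set.Ioc (0:ℝ) t, g u ω) μ := by simpa [Function.uncurry] using hPg_t.integral_prod_right
  have hK0s : Integrable (fun ω => ∫ u in Set.Ioc (0:ℝ) s, g u ω) μ := by simpa [Function.uncurry] using hPg_s.integral_prod_right
  have hKst : Integrable (fun ω => ∫ u in Set.Ioc s t, g u ω) μ := by simpa [Function.uncurry] using hPg_st.integral_prod_right
  have hL0t : Integrable (fun ω => ∫ u in Set.Ioc (0:ℝ) t, h u ω) μ := by simpa [Function.uncurry] using hPh_t.integral_prod_right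
  have hL0s : Integrable (fun ω => ∫ u in Set.Ioc (0:ℝ) s, h u ω) μ := by simpa [Function.uncurry] using hPh_s.integral_prod_right
  have hLst : Integrable (fun ω => ∫ u in Set.Ioc s t, h u ω) μ := by simpa [Function.uncurry] using hPh_st.integral_prod_right
  -- a.e. splitting of time integrals
  have hgsplit : (fun ω => ∫ u in Set.Ioc (0:ℝ) t, g u ω)
      =ᵐ[μ] fun ω => (∫ u in Set.Ioc (0:ℝ) s, g u ω) + ∫ u in Set.Ioc s t, g u ω := by
    filter_upwards [hPg_t.prod_left_ae] with ω hω
    have hω' : IntegrableOn (fun u => g u ω) (Set.Ioc (0:ℝ) t) volume := hω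
    rw [← Set.Ioc_union_Ioc_eq_Ioc hs hst]
    exact setIntegral_union (Set.Ioc_disjoint_Ioc_of_le le_rfl) measurableSet_Ioc
      (hω'.mono_set hsub_s) (hω'.mono_set hsub_st)
  have hhsplit : (fun ω => ∫ u in Set.Ioc (0:ℝ) t, h u ω)
      =ᵐ[μ] fun ω => (∫ u in Set.Ioc (0:ℝ) s, h u ω) + ∫ u in Set.Ioc s t, h u ω := by
    filter_upwards [hPh_t.prod_left_ae] with ω hω
    have hω' : IntegrableOn (fun u => h u ω) (Set.Ioc (0:ℝ) t) volume := hω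
    rw [← Set.Ioc_union_Ioc_eq_Ioc hs hst]
    exact setIntegral_union (Set.Ioc_disjoint_Ioc_of_le le_rfl) measurableSet_Ioc
      (hω'.mono_set hsub_s) (hω'.mono_set hsub_st)
  -- a.e. integrability of g u
  have hg_ae_int : ∀ᵐ u ∂(volume.restrict (Set.Ioc (0:ℝ) t)), Integrable (g u) μ := by
    have hmeas_int : Measurable fun u => ∫⁻ ω, ‖g u ω‖₊ ∂μ :=
      Measurable.lintegral_prod_right' hgmeas.enorm
    filter_upwards [ae_lt_top hmeas_int (hgint t ht0).ne] with u hu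
    exact ⟨((hgadapted u).mono (F.le u)).aestronglyMeasurable, hu⟩
  -- (E1): condexps of the increments agree
  have hE1 : μ[(fun ω => ∫ u in Set.Ioc s t, h u ω) | G s]
      =ᵐ[μ] μ[(fun ω => ∫ u in Set.Ioc s t, g u ω) | G s] := by
    refine ae_eq_condExp_of_forall_setIntegral_eq (G.le s) hKst
      (fun A hA _ => integrable_condExp.integrableOn) (fun A hA _ => ?_)
      stronglyMeasurable_condExp.aestronglyMeasurable
    rw [setIntegral_condExp (G.le s) hLst hA]
    have hAm : MeasurableSet A := (G.le s) A hA
    rw [swap_setIntegral hAm hPh_st, swap_setIntegral hAm hPg_st]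
    refine integral_congr_ae ?_
    have h1 : ∀ᵐ u ∂(volume.restrict (Set.Ioc s t)), Integrable (g u) μ :=
      ae_restrict_of_ae_restrict_of_subset hsub_st hg_ae_int
    filter_upwards [h1, ae_restrict_mem measurableSet_Ioc] with u hu hmem
    have hAu : MeasurableSet[G u] A := (G.mono hmem.1.le) A hA
    calc ∫ ω in A, h u ω ∂μ = ∫ ω in A, (μ[g u | G u]) ω ∂μ :=
          setIntegral_congr_ae hAm ((hh u).mono fun ω hω _ => hω)
      _ = ∫ ω in A, g u ω ∂μ := setIntegral_condExp (G.le u) hu hAu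
  -- (E2): ∫₀ˢ h is a.e. equal to its conditional expectation given G s
  have hE2 : (fun ω => ∫ u in Set.Ioc (0:ℝ) s, h u ω)
      =ᵐ[μ] μ[(fun ω => ∫ u in Set.Ioc (0:ℝ) s, h u ω) | G s] := by
    haveI : IsFiniteMeasure (volume.restrict (Set.Ioc (0:ℝ) s)) :=
      ⟨by rw [Measure.restrict_apply_univ]; exact measure_Ioc_lt_top⟩
    refine ae_eq_condexp_integral_param (G.le s) hPh_s ?_
    filter_upwards [ae_restrict_mem measurableSet_Ioc] with u hu
    exact ((stronglyMeasurable_condExp.mono (G.mono hu.2)).aestronglyMeasurable).congr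
      (hh u).symm
  -- assemble everything
  have hsubx : μ[(fun ω => (∫ u in Set.Ioc (0:ℝ) t, g u ω) - ∫ u in Set.Ioc (0:ℝ) t, h u ω) | G s]
      =ᵐ[μ] μ[(fun ω => ∫ u in Set.Ioc (0:ℝ) t, g u ω) | G s]
        - μ[(fun ω => ∫ u in Set.Ioc (0:ℝ) t, h u ω) | G s] := condExp_sub hK0t hL0t (G s)
  have h1 : μ[(fun ω => ∫ u in Set.Ioc (0:ℝ) t, g u ω) | G s]
      =ᵐ[μ] μ[(fun ω => ∫ u in Set.Ioc (0:ℝ) s, g u ω) | G s]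
        + μ[(fun ω => ∫ u in Set.Ioc s t, g u ω) | G s] :=
    (condExp_congr_ae hgsplit).trans (condExp_add hK0s hKst (G s))
  have h2 : μ[(fun ω => ∫ u in Set.Ioc (0:ℝ) t, h u ω) | G s]
      =ᵐ[μ] μ[(fun ω => ∫ u in Set.Ioc (0:ℝ) s, h u ω) | G s]
        + μ[(fun ω => ∫ u in Set.Ioc s t, h u ω) | G s] :=
    (condExp_congr_ae hhsplit).trans (condExp_add hL0s hLst (G s))
  filter_upwards [hsubx, h1, h2, hE1, hE2] with ω e0 e1 e2 e3 e4
  simp only [Pi.sub_apply, Pi.add_apply] at e0 e1 e2 e3 ⊢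
  rw [e0, e1, e2, e3, ← e4]
  ring
end

section
/- Let (Ω, F, P) be a probability space, (S, 𝒮) and (E, ℰ) measurable spaces, θ : Ω → S and Y : Ω → E measurable maps, π the distribution of θ on S, λ a σ-finite measure on E, and ψ : S × E → [0,∞) a bounded jointly measurable function. Assume that the joint distribution of (θ, Y) on S × E has density ψ with respect to the product measure π ⊗ λ, i.e., P((θ,Y) ∈ C) = ∫_C ψ(z,y) d(π ⊗ λ)(z,y) for every measurable C ⊆ S × E. Assume moreover that ∫_S ψ(z, Y(ω)) π(dz) > 0 for P-almost every ω. Then for every bounded measurable f : S → ℝ, E[f(θ) | σ(Y)] = (∫_S f(z) ψ(z, Y) π(dz)) / (∫_S ψ(z, Y) π(dz)), P-almost surely. -/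
/-!
Change of variables and Fubini disintegrate the joint law: for bounded measurable `H` on `S × E`
and measurable `t ⊆ E`, `E[H(θ, Y); Y ∈ t] = ∫_t ∫_S H(z, y) ψ(z, y) π(dz) λ(dy)`.
For `H(z, y) = f z` and for `H(z, y) = g y` with `g = π(f ψ) / π(ψ)` the inner integrals agree,
since `g(y) π(ψ(·, y)) = π(f ψ(·, y))`; when `π(ψ(·, y)) = 0` both sides vanish because then
`ψ(·, y) = 0` π-a.e. Hence `g ∘ Y` satisfies the defining identities of `E[f(θ) | σ(Y)]`.
-/

open MeasureTheory ProbabilityTheory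

section WeightedMean

variable {S : Type*} [MeasurableSpace S] {π : Measure S} {w : S → ℝ}

theorem integral_mul_div_integral_mul_cancel (hw0 : 0 ≤ w) (hw : Integrable w π)
    (f : S → ℝ) :
    (∫ z, f z * w z ∂π) / (∫ z, w z ∂π) * ∫ z, w z ∂π = ∫ z, f z * w z ∂π := by
  rcases eq_or_ne (∫ z, w z ∂π) 0 with h0 | h0
  · have hw_ae : w =ᵐ[π] 0 := (integral_eq_zero_iff_of_nonneg hw0 hw).mp h0
    rw [h0, mul_zero, eq_comm]
    exact integral_eq_zero_of_ae (hw_ae.mono fun z hz => by simp [hz])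
  · exact div_mul_cancel₀ _ h0

theorem abs_integral_mul_div_integral_le (hw0 : 0 ≤ w) (hw : Integrable w π) {f : S → ℝ} {C : ℝ}
    (hC : 0 ≤ C) (hfC : ∀ z, |f z| ≤ C) :
    |(∫ z, f z * w z ∂π) / ∫ z, w z ∂π| ≤ C := by
  have hw_int : 0 ≤ ∫ z, w z ∂π := integral_nonneg hw0
  rw [abs_div, abs_of_nonneg hw_int]
  refine div_le_of_le_mul₀ hw_int hC ?_
  rw [← integral_const_mul C w, ← Real.norm_eq_abs]
  refine norm_integral_le_of_norm_le (hw.const_mul C) (Filter.Eventually.of_forall fun z => ?_)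
  rw [Real.norm_eq_abs, abs_mul, abs_of_nonneg (hw0 z)]
  exact mul_le_mul_of_nonneg_right (hfC z) (hw0 z)

theorem measurable_integral_mul_div_integral [SFinite π] {E : Type*} [MeasurableSpace E]
    {f : S → ℝ} (hf : Measurable f) {ψ : S → E → ℝ} (hψ : Measurable (Function.uncurry ψ)) :
    Measurable fun y => (∫ z, f z * ψ z y ∂π) / ∫ z, ψ z y ∂π :=
  ((hf.comp measurable_fst).mul hψ).stronglyMeasurable.integral_prod_left.measurable.div
    hψ.stronglyMeasurable.integral_prod_left.measurable

end WeightedMean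

section JointDensity

variable {Ω α : Type*} [MeasurableSpace Ω] [MeasurableSpace α] {μ : Measure Ω} {X : Ω → α}
  {ρ : Measure α} {D : α → ℝ}

theorem setIntegral_preimage_comp_eq_setIntegral_mul_density (hX : Measurable X)
    (hD : Measurable D) (hD0 : 0 ≤ D)
    (hmap : μ.map X = ρ.withDensity fun a => ENNReal.ofReal (D a))
    {H : α → ℝ} (hH : Measurable H) {s : Set α} (hs : MeasurableSet s) :
    ∫ ω in X ⁻¹' s, H (X ω) ∂μ = ∫ a in s, H a * D a ∂ρ := by
  rw [← setIntegral_map hs hH.aestronglyMeasurable hX.aemeasurable, hmap,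
    setIntegral_withDensity_eq_setIntegral_toReal_smul hD.ennreal_ofReal
      (Filter.Eventually.of_forall fun _ => ENNReal.ofReal_lt_top) _ hs]
  refine setIntegral_congr_fun hs fun a _ => ?_
  rw [ENNReal.toReal_ofReal (hD0 a), smul_eq_mul, mul_comm]

theorem integrable_density_of_map_eq_withDensity [IsFiniteMeasure μ]
    (hD : Measurable D) (hD0 : 0 ≤ D)
    (hmap : μ.map X = ρ.withDensity fun a => ENNReal.ofReal (D a)) :
    Integrable D ρ := by
  refine ⟨hD.aestronglyMeasurable, (hasFiniteIntegral_iff_ofReal (ae_of_all _ hD0)).mpr ?_⟩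
  rw [← setLIntegral_univ, ← withDensity_apply _ MeasurableSet.univ, ← hmap]
  exact measure_lt_top _ _

variable {S E : Type*} [MeasurableSpace S] [MeasurableSpace E] [IsFiniteMeasure μ]
  {θ : Ω → S} {Y : Ω → E} {π : Measure S} {lam : Measure E} [SFinite π] [SFinite lam]
  {ψ : S → E → ℝ}

theorem setIntegral_preimage_eq_integral_integral_mul_density
    (hθY : Measurable fun ω => (θ ω, Y ω)) (hψ : Measurable (Function.uncurry ψ))
    (hψ0 : ∀ z y, 0 ≤ ψ z y)
    (hjoint : μ.map (fun ω => (θ ω, Y ω))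
      = (π.prod lam).withDensity fun p => ENNReal.ofReal (ψ p.1 p.2))
    {H : S × E → ℝ} (hH : Measurable H) {C : ℝ} (hHC : ∀ p, |H p| ≤ C)
    {t : Set E} (ht : MeasurableSet t) :
    ∫ ω in Y ⁻¹' t, H (θ ω, Y ω) ∂μ = ∫ y in t, ∫ z, H (z, y) * ψ z y ∂π ∂lam := by
  have hψ_int : Integrable (fun p : S × E => ψ p.1 p.2) (π.prod lam) :=
    integrable_density_of_map_eq_withDensity hψ (fun p => hψ0 p.1 p.2) hjoint
  have hHψ_int : Integrable (fun p => H p * ψ p.1 p.2) (π.prod (lam.restrict t)) := by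
    rw [← Measure.restrict_univ (μ := π), Measure.prod_restrict]
    exact (hψ_int.bdd_mul hH.aestronglyMeasurable
      (ae_of_all _ fun p => (Real.norm_eq_abs _).trans_le (hHC p))).restrict
  calc ∫ ω in Y ⁻¹' t, H (θ ω, Y ω) ∂μ
      = ∫ p in Set.univ ×ˢ t, H p * ψ p.1 p.2 ∂(π.prod lam) := by
        have h := setIntegral_preimage_comp_eq_setIntegral_mul_density (D := Function.uncurry ψ)
          hθY hψ (fun p => hψ0 p.1 p.2) hjoint hH (MeasurableSet.univ.prod ht)
        rwa [Set.mk_preimage_prod, Set.preimage_univ, Set.univ_inter] at h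
    _ = ∫ y in t, ∫ z, H (z, y) * ψ z y ∂π ∂lam := by
        rw [← Measure.prod_restrict, Measure.restrict_univ]
        exact integral_prod_symm _ hHψ_int

end JointDensity

theorem condExp_comap_ae_eq_comp_of_forall_setIntegral_preimage_eq {Ω E : Type*}
    [MeasurableSpace Ω] [MeasurableSpace E] {μ : Measure Ω} [IsFiniteMeasure μ]
    {Y : Ω → E} (hY : Measurable Y) {F : Ω → ℝ} (hF : Integrable F μ) {g : E → ℝ}
    (hg : Measurable g) (hgY : Integrable (fun ω => g (Y ω)) μ)
    (hset : ∀ t, MeasurableSet t → ∫ ω in Y ⁻¹' t, g (Y ω) ∂μ = ∫ ω in Y ⁻¹' t, F ω ∂μ) :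
    μ[F | MeasurableSpace.comap Y inferInstance] =ᵐ[μ] fun ω => g (Y ω) := by
  refine (ae_eq_condExp_of_forall_setIntegral_eq hY.comap_le hF (fun _ _ _ => hgY.integrableOn)
    ?_ (hg.comp (comap_measurable Y)).aestronglyMeasurable).symm
  rintro _ ⟨t, ht, rfl⟩ -
  exact hset t ht

theorem bayes_ratio_formula_general
    {Ω S E : Type*} [m0 : MeasurableSpace Ω] [MeasurableSpace S] [MeasurableSpace E]
    {μ : Measure Ω} [IsProbabilityMeasure μ]
    (θ : Ω → S) (Y : Ω → E) (hθ : Measurable θ) (hY : Measurable Y)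
    (lam : Measure E) [SigmaFinite lam]
    (ψ : S → E → ℝ)
    (hψmeas : Measurable (Function.uncurry ψ))
    (hψnonneg : ∀ z y, 0 ≤ ψ z y)
    (hψbdd : ∃ C : ℝ, ∀ z y, ψ z y ≤ C)
    (hdensity : ∀ C : Set (S × E), MeasurableSet C →
      μ ((fun ω => (θ ω, Y ω)) ⁻¹' C)
        = ∫⁻ p in C, ENNReal.ofReal (ψ p.1 p.2) ∂((μ.map θ).prod lam)) :
    ∀ f : S → ℝ, Measurable f → (∃ C : ℝ, ∀ z, |f z| ≤ C) →
      μ[(fun ω => f (θ ω)) | MeasurableSpace.comap Y inferInstance]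
        =ᵐ[μ] fun ω => (∫ z, f z * ψ z (Y ω) ∂(μ.map θ)) / ∫ z, ψ z (Y ω) ∂(μ.map θ) := by
  obtain ⟨Cψ, hCψ⟩ := hψbdd
  rintro f hf ⟨Cf, hCf⟩
  set π := μ.map θ
  have : IsProbabilityMeasure π := Measure.isProbabilityMeasure_map hθ.aemeasurable
  have hjoint : μ.map (fun ω => (θ ω, Y ω))
      = (π.prod lam).withDensity fun p => ENNReal.ofReal (ψ p.1 p.2) := by
    ext C hC
    rw [Measure.map_apply (hθ.prodMk hY) hC, hdensity C hC, withDensity_apply _ hC]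
  have hslice : ∀ y, Integrable (fun z => ψ z y) π := fun y =>
    .of_bound (hψmeas.comp measurable_prodMk_right).aestronglyMeasurable Cψ
      (ae_of_all _ fun z => (Real.norm_of_nonneg (hψnonneg z y)).trans_le (hCψ z y))
  set g : E → ℝ := fun y => (∫ z, f z * ψ z y ∂π) / ∫ z, ψ z y ∂π
  have hg : Measurable g := measurable_integral_mul_div_integral hf hψmeas
  have hgC : ∀ y, |g y| ≤ max Cf 0 := fun y =>
    abs_integral_mul_div_integral_le (fun z => hψnonneg z y) (hslice y) (le_max_right _ _)
      fun z => (hCf z).trans (le_max_left _ _)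
  refine condExp_comap_ae_eq_comp_of_forall_setIntegral_preimage_eq hY
    (.of_bound (hf.comp hθ).aestronglyMeasurable Cf (ae_of_all _ fun ω => hCf (θ ω))) hg
    (.of_bound (hg.comp hY).aestronglyMeasurable _ (ae_of_all _ fun ω => hgC (Y ω)))
    fun t ht => ?_
  calc ∫ ω in Y ⁻¹' t, g (Y ω) ∂μ
      = ∫ y in t, ∫ z, g y * ψ z y ∂π ∂lam :=
        setIntegral_preimage_eq_integral_integral_mul_density (hθ.prodMk hY) hψmeas hψnonneg
          hjoint (H := fun p => g p.2) (hg.comp measurable_snd) (fun p => hgC p.2) ht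
    _ = ∫ y in t, ∫ z, f z * ψ z y ∂π ∂lam := by
        refine setIntegral_congr_fun ht fun y _ => ?_
        rw [integral_const_mul]
        exact integral_mul_div_integral_mul_cancel (fun z => hψnonneg z y) (hslice y) f
    _ = ∫ ω in Y ⁻¹' t, f (θ ω) ∂μ :=
        (setIntegral_preimage_eq_integral_integral_mul_density (hθ.prodMk hY) hψmeas hψnonneg
          hjoint (H := fun p => f p.1) (hf.comp measurable_fst) (fun p => hCf p.1) ht).symm

/-- Bayes-ratio (Kallianpur–Striebel type) formula: if the joint law of `(θ, Y)` has
bounded density `ψ` with respect to `π ⊗ λ`, where `π` is the law of `θ`, then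
`E[f(θ) | σ(Y)] = (∫ f(z) ψ(z, Y) π(dz)) / (∫ ψ(z, Y) π(dz))` a.s. -/
theorem bayes_ratio_formula
    {Ω S E : Type*} [m0 : MeasurableSpace Ω] [MeasurableSpace S] [MeasurableSpace E]
    {μ : Measure Ω} [IsProbabilityMeasure μ]
    (θ : Ω → S) (Y : Ω → E) (hθ : Measurable θ) (hY : Measurable Y)
    (lam : Measure E) [SigmaFinite lam]
    (ψ : S → E → ℝ)
    (hψmeas : Measurable (Function.uncurry ψ))
    (hψnonneg : ∀ z y, 0 ≤ ψ z y)
    (hψbdd : ∃ C : ℝ, ∀ z y, ψ z y ≤ C)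
    (hdensity : ∀ C : Set (S × E), MeasurableSet C →
      μ ((fun ω => (θ ω, Y ω)) ⁻¹' C)
        = ∫⁻ p in C, ENNReal.ofReal (ψ p.1 p.2) ∂((μ.map θ).prod lam))
    (hpos : ∀ᵐ ω ∂μ, 0 < ∫ z, ψ z (Y ω) ∂(μ.map θ)) :
    ∀ f : S → ℝ, Measurable f → (∃ C : ℝ, ∀ z, |f z| ≤ C) →
      μ[(fun ω => f (θ ω)) | MeasurableSpace.comap Y inferInstance]
        =ᵐ[μ] fun ω => (∫ z, f z * ψ z (Y ω) ∂(μ.map θ)) / ∫ z, ψ z (Y ω) ∂(μ.map θ) :=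
  bayes_ratio_formula_general (m0 := m0) θ Y hθ hY lam ψ hψmeas hψnonneg hψbdd hdensity
end

section
/- Let (Ω, F, P) be a probability space, S a standard Borel space, (E, ℰ) a countably generated measurable space, θ : Ω → S and Y : Ω → E measurable maps, π the distribution of θ, λ a σ-finite measure on E, and ψ : S × E → [0,∞) a bounded jointly measurable function such that the joint distribution of (θ, Y) has density ψ with respect to π ⊗ λ, and such that Z(ω) := ∫_S ψ(z, Y(ω)) π(dz) > 0 for P-almost every ω. Then a regular version κ of the conditional distribution of θ given Y satisfies: for P-almost every ω and every measurable A ⊆ S, κ(ω, A) = (∫_A ψ(z, Y(ω)) π(dz)) / Z(ω). In other words, the posterior distribution of θ given the observation Y is absolutely continuous with respect to the prior π with density ψ(·, Y)/π(ψ(·, Y)). -/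
open MeasureTheory ProbabilityTheory
open scoped ENNReal

/-!
If the joint law of `(θ, Y)` is `ρ · (π ⊗ λ)`, then the law of `Y` is `Z · λ` with
`Z y = ∫ ρ(z, y) dπ(z)`, and the law of `(Y, θ)` disintegrates as `(Z · λ) ⊗ κ` where
`κ y = Z(y)⁻¹ ρ(·, y) · π`: integrating `κ y` against `Z · λ` cancels the normalisation wherever
`Z y` is finite, which is `λ`-a.e. because `∫ Z dλ` is the total mass of the joint law.
Uniqueness of disintegrations then identifies `κ` with `condDistrib θ Y μ`, almost surely in `Y`.
-/

section BayesPosterior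

variable {S E : Type*} [MeasurableSpace S] [MeasurableSpace E]
  {π : Measure S} {lam : Measure E} {ρ : S × E → ℝ≥0∞}

noncomputable def marginalDensity (π : Measure S) (ρ : S × E → ℝ≥0∞) (y : E) : ℝ≥0∞ :=
  ∫⁻ z, ρ (z, y) ∂π

noncomputable def bayesPosterior (π : Measure S) [SFinite π] (ρ : S × E → ℝ≥0∞) : Kernel E S :=
  (Kernel.const E π).withDensity fun y z => (marginalDensity π ρ y)⁻¹ * ρ (z, y)

variable [SFinite π]

lemma measurable_marginalDensity (hρ : Measurable ρ) : Measurable (marginalDensity π ρ) :=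
  hρ.lintegral_prod_left'

lemma bayesPosterior_apply (hρ : Measurable ρ) (y : E) (s : Set S) :
    bayesPosterior π ρ y s = (marginalDensity π ρ y)⁻¹ * ∫⁻ z in s, ρ (z, y) ∂π := by
  have hdens : Measurable (Function.uncurry fun y z => (marginalDensity π ρ y)⁻¹ * ρ (z, y)) :=
    ((measurable_marginalDensity hρ).inv.comp measurable_fst).mul (hρ.comp measurable_swap)
  rw [bayesPosterior, Kernel.withDensity_apply' _ hdens, Kernel.const_apply]
  exact lintegral_const_mul _ (hρ.comp measurable_prodMk_right)

lemma isFiniteKernel_bayesPosterior (hρ : Measurable ρ) : IsFiniteKernel (bayesPosterior π ρ) :=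
  ⟨⟨1, ENNReal.one_lt_top, fun y => by
    rw [bayesPosterior_apply hρ y Set.univ, Measure.restrict_univ]
    exact ENNReal.inv_mul_le_one _⟩⟩

variable [SFinite lam]

lemma snd_withDensity_prod (hρ : Measurable ρ) :
    ((π.prod lam).withDensity ρ).snd = lam.withDensity (marginalDensity π ρ) := by
  ext B hB
  rw [Measure.snd_apply hB, withDensity_apply _ (measurable_snd hB), withDensity_apply _ hB,
    ← Set.univ_prod, ← Measure.prod_restrict, Measure.restrict_univ, lintegral_prod_symm' _ hρ]
  rfl

lemma withDensity_prod_map_swap_apply (hρ : Measurable ρ) {s : Set (E × S)}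
    (hs : MeasurableSet s) :
    ((π.prod lam).withDensity ρ).map Prod.swap s
      = ∫⁻ y, ∫⁻ z in Prod.mk y ⁻¹' s, ρ (z, y) ∂π ∂lam := by
  rw [Measure.map_apply measurable_swap hs, withDensity_apply _ (measurable_swap hs),
    ← lintegral_indicator (measurable_swap hs), lintegral_prod_symm' _ (hρ.indicator
      (measurable_swap hs))]
  refine lintegral_congr fun y => ?_
  rw [← lintegral_indicator (measurable_prodMk_left hs)]
  rfl

lemma withDensity_prod_map_swap_eq_compProd (hρ : Measurable ρ)
    [IsFiniteMeasure ((π.prod lam).withDensity ρ)] :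
    ((π.prod lam).withDensity ρ).map Prod.swap
      = lam.withDensity (marginalDensity π ρ) ⊗ₘ bayesPosterior π ρ := by
  have := isFiniteKernel_bayesPosterior (π := π) hρ
  have hZ := measurable_marginalDensity (π := π) hρ
  have hZ_finite : ∀ᵐ y ∂lam, marginalDensity π ρ y < ∞ := by
    refine ae_lt_top hZ ?_
    rw [← setLIntegral_univ, ← withDensity_apply _ MeasurableSet.univ,
      ← snd_withDensity_prod hρ, Measure.snd_univ]
    exact measure_ne_top _ _
  ext s hs
  rw [withDensity_prod_map_swap_apply hρ hs, Measure.compProd_apply hs,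
    lintegral_withDensity_eq_lintegral_mul _ hZ (Kernel.measurable_kernel_prodMk_left hs)]
  refine lintegral_congr_ae ?_
  filter_upwards [hZ_finite] with y hy
  have hle : ∫⁻ z in Prod.mk y ⁻¹' s, ρ (z, y) ∂π ≤ marginalDensity π ρ y :=
    setLIntegral_le_lintegral _ _
  rw [Pi.mul_apply, bayesPosterior_apply hρ y,
    ← ENNReal.div_eq_inv_mul, ENNReal.mul_div_cancel' (fun h0 => le_antisymm (h0 ▸ hle) zero_le)
      (fun htop => absurd htop hy.ne)]

theorem condDistrib_ae_eq_bayesPosterior [StandardBorelSpace S] [Nonempty S]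
    {Ω : Type*} [MeasurableSpace Ω] {μ : Measure Ω} [IsFiniteMeasure μ]
    {θ : Ω → S} {Y : Ω → E} (hθ : Measurable θ) (hY : Measurable Y) (hρ : Measurable ρ)
    (hjoint : μ.map (fun ω => (θ ω, Y ω)) = (π.prod lam).withDensity ρ) :
    condDistrib θ Y μ =ᵐ[μ.map Y] bayesPosterior π ρ := by
  have := isFiniteKernel_bayesPosterior (π := π) hρ
  have : IsFiniteMeasure ((π.prod lam).withDensity ρ) := hjoint ▸ inferInstance
  have hlawY : μ.map Y = lam.withDensity (marginalDensity π ρ) := by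
    rw [← Measure.snd_map_prodMk hθ, hjoint, snd_withDensity_prod hρ]
  refine condDistrib_ae_eq_of_measure_eq_compProd_of_measurable hY hθ ?_
  rw [hlawY, ← withDensity_prod_map_swap_eq_compProd hρ, ← hjoint,
    Measure.map_map measurable_swap (hθ.prodMk hY)]
  rfl

end BayesPosterior

theorem posterior_distribution_bayes_general
    {Ω S E : Type*} [m0 : MeasurableSpace Ω]
    [MeasurableSpace S] [StandardBorelSpace S] [Nonempty S]
    [mE : MeasurableSpace E]
    {μ : Measure Ω} [IsProbabilityMeasure μ]
    (θ : Ω → S) (Y : Ω → E) (hθ : Measurable θ) (hY : Measurable Y)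
    (lam : Measure E) [SigmaFinite lam]
    (ψ : S → E → ℝ)
    (hψmeas : Measurable (Function.uncurry ψ))
    (hdensity : ∀ C : Set (S × E), MeasurableSet C →
      μ ((fun ω => (θ ω, Y ω)) ⁻¹' C)
        = ∫⁻ p in C, ENNReal.ofReal (ψ p.1 p.2) ∂((μ.map θ).prod lam)) :
    ∀ᵐ ω ∂μ, ∀ A : Set S, MeasurableSet A →
      condDistrib θ Y μ (Y ω) A
        = (∫⁻ z in A, ENNReal.ofReal (ψ z (Y ω)) ∂(μ.map θ))
            / ∫⁻ z, ENNReal.ofReal (ψ z (Y ω)) ∂(μ.map θ) := by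
  have hρ : Measurable fun p : S × E => ENNReal.ofReal (ψ p.1 p.2) :=
    ENNReal.measurable_ofReal.comp hψmeas
  have hjoint : μ.map (fun ω => (θ ω, Y ω))
      = ((μ.map θ).prod lam).withDensity fun p => ENNReal.ofReal (ψ p.1 p.2) := by
    ext C hC
    rw [Measure.map_apply (hθ.prodMk hY) hC, withDensity_apply _ hC, hdensity C hC]
  filter_upwards [ae_of_ae_map hY.aemeasurable
    (condDistrib_ae_eq_bayesPosterior hθ hY hρ hjoint)] with ω hω A _
  rw [hω, bayesPosterior_apply hρ _ A, ENNReal.div_eq_inv_mul]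
  rfl

/-- Measure-valued Bayes update: if the joint law of `(θ, Y)` has bounded density `ψ` with
respect to `π ⊗ λ` (`π` the prior law of `θ`) and the normalizer is a.s. positive, then the
regular conditional distribution of `θ` given `Y` is, almost surely, absolutely continuous
with respect to `π` with density `ψ(·, Y) / π(ψ(·, Y))`. -/
theorem posterior_distribution_bayes
    {Ω S E : Type*} [m0 : MeasurableSpace Ω]
    [MeasurableSpace S] [StandardBorelSpace S] [Nonempty S]
    [mE : MeasurableSpace E] [MeasurableSpace.CountablyGenerated E]
    {μ : Measure Ω} [IsProbabilityMeasure μ]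
    (θ : Ω → S) (Y : Ω → E) (hθ : Measurable θ) (hY : Measurable Y)
    (lam : Measure E) [SigmaFinite lam]
    (ψ : S → E → ℝ)
    (hψmeas : Measurable (Function.uncurry ψ))
    (hψnonneg : ∀ z y, 0 ≤ ψ z y)
    (hψbdd : ∃ C : ℝ, ∀ z y, ψ z y ≤ C)
    (hdensity : ∀ C : Set (S × E), MeasurableSet C →
      μ ((fun ω => (θ ω, Y ω)) ⁻¹' C)
        = ∫⁻ p in C, ENNReal.ofReal (ψ p.1 p.2) ∂((μ.map θ).prod lam))
    (hpos : ∀ᵐ ω ∂μ, 0 < ∫ z, ψ z (Y ω) ∂(μ.map θ)) :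
    ∀ᵐ ω ∂μ, ∀ A : Set S, MeasurableSet A →
      condDistrib θ Y μ (Y ω) A
        = (∫⁻ z in A, ENNReal.ofReal (ψ z (Y ω)) ∂(μ.map θ))
            / ∫⁻ z, ENNReal.ofReal (ψ z (Y ω)) ∂(μ.map θ) :=
  posterior_distribution_bayes_general (m0 := m0) (mE := mE) θ Y hθ hY lam ψ hψmeas hdensity
end
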